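/- Let A = op⟨{F₁=w₁,...,Fₙ=wₙ}⟩ ≺ N be a monotone aggregate. Then the formula ⋀_{I : ¬(op(W_I) ≺ N)} ((⋀_{i∈I} Fᵢ) → (⋁_{i∈Ī} Fᵢ)) is strongly equivalent to ⋀_{I : ¬(op(W_I) ≺ N)} (⋁_{i∈Ī} Fᵢ), where W_I = {wᵢ : i∈I} and Ī = {1,...,n} \ I. -/
import Mathlib


inductive PForm (α : Type) : Type where
  | bot : PForm α
  | atom : α → PForm α
  | and : PForm α → PForm α → PForm α
  | or : PForm α → PForm α → PForm α
  | imp : PForm α → PForm α → PForm α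

namespace PForm

variable {α : Type}

def top : PForm α := imp bot bot

def neg (F : PForm α) : PForm α := imp F bot

def sat (X : Set α) : PForm α → Prop
  | bot => False
  | atom a => a ∈ X
  | and F G => sat X F ∧ sat X G
  | or F G => sat X F ∨ sat X G
  | imp F G => sat X F → sat X G

open Classical in
noncomputable def reduct (X : Set α) : PForm α → PForm α
  | bot => bot
  | atom a => if a ∈ X then atom a else bot
  | and F G => if sat X (and F G) then and (reduct X F) (reduct X G) else bot
  | or F G => if sat X (or F G) then or (reduct X F) (reduct X G) else bot
  | imp F G => if sat X (imp F G) then imp (reduct X F) (reduct X G) else bot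

def headAtoms : PForm α → Set α
  | bot => ∅
  | atom a => {a}
  | and F G => headAtoms F ∪ headAtoms G
  | or F G => headAtoms F ∪ headAtoms G
  | imp _ G => headAtoms G

def atomsOf : PForm α → Set α
  | bot => ∅
  | atom a => {a}
  | and F G => atomsOf F ∪ atomsOf G
  | or F G => atomsOf F ∪ atomsOf G
  | imp F G => atomsOf F ∪ atomsOf G

def htSat (X Y : Set α) : PForm α → Prop
  | bot => False
  | atom a => a ∈ X
  | and F G => htSat X Y F ∧ htSat X Y G
  | or F G => htSat X Y F ∨ htSat X Y G
  | imp F G => (htSat X Y F → htSat X Y G) ∧ sat Y (imp F G)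

end PForm

variable {α : Type}

/-- Satisfaction of a theory (set of formulas). -/
def satTh (X : Set α) (Γ : Set (PForm α)) : Prop := ∀ F ∈ Γ, PForm.sat X F

/-- The reduct of a theory relative to X. -/
noncomputable def reductTh (X : Set α) (Γ : Set (PForm α)) : Set (PForm α) :=
  PForm.reduct X '' Γ

/-- X is a stable model of Γ iff X is a minimal set satisfying Γ^X. -/
def StableModel (Γ : Set (PForm α)) (X : Set α) : Prop :=
  satTh X (reductTh X Γ) ∧ ∀ Y : Set α, Y ⊂ X → ¬ satTh Y (reductTh X Γ)

def htSatTh (X Y : Set α) (Γ : Set (PForm α)) : Prop := ∀ F ∈ Γ, PForm.htSat X Y F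

def theoryHeadAtoms (Γ : Set (PForm α)) : Set α := ⋃ F ∈ Γ, PForm.headAtoms F

def listAnd : List (PForm α) → PForm α
  | [] => PForm.top
  | F :: l => PForm.and F (listAnd l)

def listOr : List (PForm α) → PForm α
  | [] => PForm.bot
  | F :: l => PForm.or F (listOr l)

noncomputable def finsetAnd {ι : Type} (s : Finset ι) (f : ι → PForm α) : PForm α :=
  listAnd (s.toList.map f)

noncomputable def finsetOr {ι : Type} (s : Finset ι) (f : ι → PForm α) : PForm α :=
  listOr (s.toList.map f)

open Classical in
/-- `satAgg X F w P` : X satisfies the aggregate op⟨{F₁=w₁,...,Fₙ=wₙ}⟩ ≺ N, where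
`P W` stands for `op(W) ≺ N`. -/
noncomputable def satAgg {n : ℕ} (X : Set α) (F : Fin n → PForm α) (w : Fin n → ℝ)
    (P : Multiset ℝ → Prop) : Prop :=
  P (Multiset.map w (Finset.filter (fun i => PForm.sat X (F i)) Finset.univ).val)

open Classical in
/-- The propositional formula corresponding to the aggregate:
⋀_{I : ¬ P(W_I)} ((⋀_{i∈I} Fᵢ) → (⋁_{i∈Ī} Fᵢ)). -/
noncomputable def aggFormula {n : ℕ} (F : Fin n → PForm α) (w : Fin n → ℝ)
    (P : Multiset ℝ → Prop) : PForm α :=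
  finsetAnd (Finset.filter (fun I : Finset (Fin n) => ¬ P (Multiset.map w I.val)) Finset.univ)
    (fun I => PForm.imp (finsetAnd I F) (finsetOr Iᶜ F))

section Aux

variable {X Y : Set α}

theorem sat_of_sat_reduct : ∀ G : PForm α, PForm.sat Y (PForm.reduct X G) → PForm.sat X G
  | PForm.bot, h => h.elim
  | PForm.atom a, h => by
      by_cases hx : a ∈ X
      · exact hx
      · simp only [PForm.reduct, if_neg hx] at h
        exact h.elim
  | PForm.and F G, h => by
      by_cases hx : PForm.sat X (PForm.and F G)
      · exact hx
      · simp only [PForm.reduct, if_neg hx] at h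
        exact h.elim
  | PForm.or F G, h => by
      by_cases hx : PForm.sat X (PForm.or F G)
      · exact hx
      · simp only [PForm.reduct, if_neg hx] at h
        exact h.elim
  | PForm.imp F G, h => by
      by_cases hx : PForm.sat X (PForm.imp F G)
      · exact hx
      · simp only [PForm.reduct, if_neg hx] at h
        exact h.elim

theorem sat_reduct_and {F G : PForm α} :
    PForm.sat Y (PForm.reduct X (PForm.and F G)) ↔
      PForm.sat Y (PForm.reduct X F) ∧ PForm.sat Y (PForm.reduct X G) := by
  by_cases hx : PForm.sat X (PForm.and F G)
  · simp only [PForm.reduct, if_pos hx]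
    exact Iff.rfl
  · simp only [PForm.reduct, if_neg hx]
    constructor
    · exact fun h => h.elim
    · rintro ⟨h1, h2⟩
      exact absurd ⟨sat_of_sat_reduct F h1, sat_of_sat_reduct G h2⟩ hx

theorem sat_reduct_or {F G : PForm α} :
    PForm.sat Y (PForm.reduct X (PForm.or F G)) ↔
      PForm.sat Y (PForm.reduct X F) ∨ PForm.sat Y (PForm.reduct X G) := by
  by_cases hx : PForm.sat X (PForm.or F G)
  · simp only [PForm.reduct, if_pos hx]
    exact Iff.rfl
  · simp only [PForm.reduct, if_neg hx]
    constructor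
    · exact fun h => h.elim
    · rintro (h1 | h2)
      · exact absurd (Or.inl (sat_of_sat_reduct F h1)) hx
      · exact absurd (Or.inr (sat_of_sat_reduct G h2)) hx

theorem sat_reduct_imp {F G : PForm α} :
    PForm.sat Y (PForm.reduct X (PForm.imp F G)) ↔
      PForm.sat X (PForm.imp F G) ∧
        (PForm.sat Y (PForm.reduct X F) → PForm.sat Y (PForm.reduct X G)) := by
  by_cases hx : PForm.sat X (PForm.imp F G)
  · simp only [PForm.reduct, if_pos hx]
    exact ⟨fun h => ⟨hx, h⟩, fun h => h.2⟩
  · simp only [PForm.reduct, if_neg hx]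
    exact ⟨fun h => h.elim, fun h => absurd h.1 hx⟩

theorem sat_reduct_listAnd : ∀ l : List (PForm α),
    PForm.sat Y (PForm.reduct X (listAnd l)) ↔ ∀ G ∈ l, PForm.sat Y (PForm.reduct X G)
  | [] => by
      simp only [listAnd, PForm.top, sat_reduct_imp]
      simp [PForm.sat, PForm.reduct]
  | G :: l => by
      simp only [listAnd, sat_reduct_and, sat_reduct_listAnd l, List.mem_cons]
      constructor
      · rintro ⟨h1, h2⟩ H (rfl | hH)
        · exact h1
        · exact h2 H hH
      · intro h
        exact ⟨h G (Or.inl rfl), fun H hH => h H (Or.inr hH)⟩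

theorem sat_reduct_listOr : ∀ l : List (PForm α),
    PForm.sat Y (PForm.reduct X (listOr l)) ↔ ∃ G ∈ l, PForm.sat Y (PForm.reduct X G)
  | [] => by simp [listOr, PForm.reduct, PForm.sat]
  | G :: l => by
      simp only [listOr, sat_reduct_or, sat_reduct_listOr l, List.mem_cons]
      constructor
      · rintro (h | ⟨H, hH, h⟩)
        · exact ⟨G, Or.inl rfl, h⟩
        · exact ⟨H, Or.inr hH, h⟩
      · rintro ⟨H, (rfl | hH), h⟩
        · exact Or.inl h
        · exact Or.inr ⟨H, hH, h⟩

theorem sat_reduct_finsetAnd {ι : Type} {s : Finset ι} {f : ι → PForm α} :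
    PForm.sat Y (PForm.reduct X (finsetAnd s f)) ↔
      ∀ i ∈ s, PForm.sat Y (PForm.reduct X (f i)) := by
  rw [finsetAnd, sat_reduct_listAnd]
  simp

theorem sat_reduct_finsetOr {ι : Type} {s : Finset ι} {f : ι → PForm α} :
    PForm.sat Y (PForm.reduct X (finsetOr s f)) ↔
      ∃ i ∈ s, PForm.sat Y (PForm.reduct X (f i)) := by
  rw [finsetOr, sat_reduct_listOr]
  simp

end Aux

open Classical in
/-- for a monotone aggregate, the antecedents can be dropped,
preserving strong equivalence. -/
theorem stmt14 {n : ℕ} (F : Fin n → PForm α) (w : Fin n → ℝ) (P : Multiset ℝ → Prop)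
    (hmono : ∀ W₁ W₂ : Multiset ℝ, W₁ ≤ W₂ →
      W₂ ≤ Multiset.map w Finset.univ.val → P W₁ → P W₂) :
    ∀ X Y : Set α,
      PForm.sat Y (PForm.reduct X (aggFormula F w P)) ↔
      PForm.sat Y (PForm.reduct X
        (finsetAnd
          (Finset.filter (fun I : Finset (Fin n) => ¬ P (Multiset.map w I.val)) Finset.univ)
          (fun I => finsetOr Iᶜ F))) := by
  intro X Y
  rw [aggFormula, sat_reduct_finsetAnd, sat_reduct_finsetAnd]
  constructor
  · intro h I hI
    rw [Finset.mem_filter] at hI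
    by_contra hno
    rw [sat_reduct_finsetOr] at hno
    push_neg at hno
    set J : Finset (Fin n) :=
      Finset.filter (fun i => PForm.sat Y (PForm.reduct X (F i))) Finset.univ with hJ
    have hJI : J ⊆ I := by
      intro i hi
      rw [hJ, Finset.mem_filter] at hi
      by_contra hiI
      exact hno i (Finset.mem_compl.mpr hiI) hi.2
    have hJmem : J ∈ Finset.filter
        (fun I : Finset (Fin n) => ¬ P (Multiset.map w I.val)) Finset.univ := by
      rw [Finset.mem_filter]
      refine ⟨Finset.mem_univ _, fun hP => hI.2 ?_⟩
      refine hmono _ _ (Multiset.map_le_map ?_) (Multiset.map_le_map ?_) hP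
      · exact Finset.val_le_iff.mpr hJI
      · exact Finset.val_le_iff.mpr (Finset.subset_univ I)
    have := (sat_reduct_imp.mp (h J hJmem)).2
    have hant : PForm.sat Y (PForm.reduct X (finsetAnd J F)) := by
      rw [sat_reduct_finsetAnd]
      intro i hi
      rw [hJ, Finset.mem_filter] at hi
      exact hi.2
    obtain ⟨i, hic, hsi⟩ := sat_reduct_finsetOr.mp (this hant)
    rw [Finset.mem_compl, hJ, Finset.mem_filter] at hic
    exact hic ⟨Finset.mem_univ _, hsi⟩
  · intro h I hI
    have hor := h I hI
    rw [sat_reduct_imp]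
    exact ⟨fun _ => sat_of_sat_reduct _ hor, fun _ => hor⟩
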